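/- If the density ratio p(Θ)/q(Θ) is bounded, then the multi-sample importance-weighted KL divergence converges to zero: lim_{k→∞} KL^k(q,p) = 0. -/

import Mathlib

set_option linter.unusedSectionVars false
set_option linter.unnecessarySimpa false
set_option linter.unusedVariables false

set_option maxHeartbeats 2000000

open MeasureTheory Filter

section Helpers

variable {α : Type*} [MeasurableSpace α]

lemma helper_integral_pi_prod (ν : Measure α) [SigmaFinite ν] {k : ℕ} (f : Fin k → α → ℝ) :
    ∫ θ : Fin k → α, ∏ i, f i (θ i) ∂(Measure.pi fun _ : Fin k => ν)
      = ∏ i, ∫ x, f i x ∂ν := by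
  letI : MeasureSpace α := ⟨ν⟩
  exact MeasureTheory.integral_fintype_prod_eq_prod (μ := fun _ => ν) f

lemma helper_integrable_pi_prod (ν : Measure α) [SigmaFinite ν] {k : ℕ} (f : Fin k → α → ℝ)
    (hf : ∀ i, Integrable (f i) ν) :
    Integrable (fun θ : Fin k → α => ∏ i, f i (θ i)) (Measure.pi fun _ : Fin k => ν) := by
  letI : MeasureSpace α := ⟨ν⟩
  exact MeasureTheory.Integrable.fintype_prod hf

lemma helper_prod_ite {k : ℕ} (i : Fin k) (f g : α → ℝ) (θ : Fin k → α) :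
    (∏ l, (if l = i then f else g) (θ l))
      = f (θ i) * ∏ j ∈ Finset.univ.erase i, g (θ j) := by
  rw [← Finset.mul_prod_erase Finset.univ _ (Finset.mem_univ i)]
  congr 1
  · simp
  · refine Finset.prod_congr rfl fun j hj => ?_
    rw [if_neg (Finset.mem_erase.mp hj).1]

lemma helper_integral_pi_eval (ν : Measure α) [IsProbabilityMeasure ν] {k : ℕ}
    (f : α → ℝ) (i : Fin k) :
    ∫ θ : Fin k → α, f (θ i) ∂(Measure.pi fun _ : Fin k => ν) = ∫ x, f x ∂ν := by
  rw [show (fun θ : Fin k → α => f (θ i))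
      = (fun θ : Fin k → α => ∏ l, (if l = i then f else fun _ => (1:ℝ)) (θ l)) from
    funext fun θ => by rw [helper_prod_ite]; simp]
  rw [helper_integral_pi_prod]
  rw [Finset.prod_eq_single i (fun b _ hb => by simp [if_neg hb]) (by simp)]
  simp

lemma helper_integrable_pi_eval (ν : Measure α) [IsProbabilityMeasure ν] {k : ℕ}
    (f : α → ℝ) (hf : Integrable f ν) (i : Fin k) :
    Integrable (fun θ : Fin k → α => f (θ i)) (Measure.pi fun _ : Fin k => ν) := by
  rw [show (fun θ : Fin k → α => f (θ i))
      = (fun θ : Fin k → α => ∏ l, (if l = i then f else fun _ => (1:ℝ)) (θ l)) from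
    funext fun θ => by rw [helper_prod_ite]; simp]
  refine helper_integrable_pi_prod ν _ (fun l => ?_)
  by_cases hl : l = i
  · simpa [hl] using hf
  · simpa [hl] using integrable_const (1:ℝ)

lemma helper_integral_pi_single (ν : Measure α) [IsProbabilityMeasure ν] {k : ℕ}
    (f g : α → ℝ) (i : Fin k) :
    ∫ θ : Fin k → α, f (θ i) * ∏ j ∈ Finset.univ.erase i, g (θ j)
        ∂(Measure.pi fun _ : Fin k => ν)
      = (∫ x, f x ∂ν) * (∫ x, g x ∂ν) ^ (k - 1) := by
  rw [show (fun θ : Fin k → α => f (θ i) * ∏ j ∈ Finset.univ.erase i, g (θ j))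
      = (fun θ : Fin k → α => ∏ l, (if l = i then f else g) (θ l)) from
    funext fun θ => (helper_prod_ite i f g θ).symm]
  rw [helper_integral_pi_prod]
  rw [← Finset.mul_prod_erase Finset.univ _ (Finset.mem_univ i)]
  congr 1
  · simp
  · rw [Finset.prod_congr rfl (fun j hj => by rw [if_neg (Finset.mem_erase.mp hj).1]),
      Finset.prod_const, Finset.card_erase_of_mem (Finset.mem_univ i), Finset.card_univ,
      Fintype.card_fin]

lemma helper_integrable_pi_single (ν : Measure α) [IsProbabilityMeasure ν] {k : ℕ}
    (f g : α → ℝ) (hf : Integrable f ν) (hg : Integrable g ν) (i : Fin k) :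
    Integrable (fun θ : Fin k → α => f (θ i) * ∏ j ∈ Finset.univ.erase i, g (θ j))
      (Measure.pi fun _ : Fin k => ν) := by
  rw [show (fun θ : Fin k → α => f (θ i) * ∏ j ∈ Finset.univ.erase i, g (θ j))
      = (fun θ : Fin k → α => ∏ l, (if l = i then f else g) (θ l)) from
    funext fun θ => (helper_prod_ite i f g θ).symm]
  refine helper_integrable_pi_prod ν _ (fun l => ?_)
  by_cases hl : l = i
  · simpa [hl] using hf
  · simpa [hl] using hg

lemma helper_integral_pi_pair (ν : Measure α) [IsProbabilityMeasure ν] {k : ℕ}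
    (f g : α → ℝ) (i j : Fin k) (hij : j ≠ i) :
    ∫ θ : Fin k → α, f (θ i) * g (θ j) ∂(Measure.pi fun _ : Fin k => ν)
      = (∫ x, f x ∂ν) * ∫ x, g x ∂ν := by
  have hjmem : j ∈ Finset.univ.erase i := Finset.mem_erase.mpr ⟨hij, Finset.mem_univ j⟩
  have key : ∀ θ : Fin k → α,
      (∏ l, (if l = i then f else if l = j then g else fun _ => (1:ℝ)) (θ l))
        = f (θ i) * g (θ j) := by
    intro θ
    rw [← Finset.mul_prod_erase Finset.univ _ (Finset.mem_univ i),
      ← Finset.mul_prod_erase _ _ hjmem,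
      Finset.prod_congr rfl (fun l hl =>
        show (if l = i then f else if l = j then g else fun _ => (1:ℝ)) (θ l) = 1 by
          rw [if_neg (Finset.mem_erase.mp (Finset.mem_erase.mp hl).2).1,
            if_neg (Finset.mem_erase.mp hl).1])]
    simp [hij]
  rw [show (fun θ : Fin k → α => f (θ i) * g (θ j))
      = (fun θ : Fin k → α => ∏ l, (if l = i then f else if l = j then g else fun _ => (1:ℝ)) (θ l))
      from funext fun θ => (key θ).symm]
  rw [helper_integral_pi_prod]
  rw [← Finset.mul_prod_erase Finset.univ _ (Finset.mem_univ i),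
    ← Finset.mul_prod_erase _ _ hjmem,
    Finset.prod_congr rfl (fun l hl =>
      show (∫ x, (if l = i then f else if l = j then g else fun _ => (1:ℝ)) x ∂ν) = 1 by
        rw [if_neg (Finset.mem_erase.mp (Finset.mem_erase.mp hl).2).1,
          if_neg (Finset.mem_erase.mp hl).1]
        simp)]
  simp [hij]

lemma helper_integrable_of_bound {β : Type*} [MeasurableSpace β] (μ : Measure β)
    [IsFiniteMeasure μ] (f : β → ℝ) (B : ℝ) (hm : AEStronglyMeasurable f μ)
    (hb : ∀ᵐ x ∂μ, |f x| ≤ B) : Integrable f μ :=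
  ⟨hm, HasFiniteIntegral.of_bounded (C := B) (by simpa [Real.norm_eq_abs] using hb)⟩

lemma helper_ae_pi (ν : Measure α) [SigmaFinite ν] {k : ℕ} {P : α → Prop}
    (h : ∀ᵐ x ∂ν, P x) :
    ∀ᵐ θ : Fin k → α ∂(Measure.pi fun _ : Fin k => ν), ∀ i, P (θ i) :=
  ae_all_iff.mpr fun i => MeasureTheory.Measure.tendsto_eval_ae_ae.eventually h

lemma helper_log_quad {a : ℝ} (ha : 1/2 ≤ a) :
    (a - 1) - 2*(a - 1)^2 ≤ Real.log a := by
  have ha0 : 0 < a := by linarith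
  have h1 : Real.log a⁻¹ ≤ a⁻¹ - 1 := Real.log_le_sub_one_of_pos (by positivity)
  rw [Real.log_inv] at h1
  have h2 : 1 - a⁻¹ ≤ Real.log a := by linarith
  have e : a * a⁻¹ = 1 := mul_inv_cancel₀ ha0.ne'
  nlinarith [sq_nonneg (a - 1), mul_nonneg (sq_nonneg (a-1)) (by linarith : (0:ℝ) ≤ 2*a - 1),
    sq_nonneg (a*a⁻¹ - 1)]

lemma aux_main {α : Type*} [MeasurableSpace α] (ν : Measure α) [IsProbabilityMeasure ν]
    (R : α → ℝ) (hRm : Measurable R) (hR0 : ∀ x, 0 ≤ R x)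
    (C : ℝ) (hRC : ∀ᵐ x ∂ν, R x ≤ C)
    (hR1 : ∫ x, R x ∂ν = 1)
    (hlogR : Integrable (fun x => Real.log (R x)) ν)
    (hInt : ∀ k : ℕ, Integrable
      (fun θ : Fin k → α => Real.log ((1 / (k:ℝ)) * ∑ i, R (θ i)))
      (Measure.pi fun _ : Fin k => ν)) :
    Tendsto (fun k : ℕ =>
        ∫ θ : Fin k → α, Real.log ((1 / (k:ℝ)) * ∑ i, R (θ i))
          ∂(Measure.pi fun _ : Fin k => ν)) atTop (nhds 0) := by
  classical
  have hR_int : Integrable R ν := helper_integrable_of_bound ν R C hRm.aestronglyMeasurable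
    (hRC.mono fun x hx => by rw [abs_of_nonneg (hR0 x)]; exact hx)
  have hC1 : (1:ℝ) ≤ C := by
    have := integral_mono_ae hR_int (integrable_const C) hRC
    simpa [hR1] using this
  have hC0 : (0:ℝ) < C := lt_of_lt_of_le one_pos hC1
  have hRR_int : Integrable (fun x => R x * R x) ν :=
    helper_integrable_of_bound ν _ (C*C) (hRm.mul hRm).aestronglyMeasurable
      (hRC.mono fun x hx => by
        rw [abs_of_nonneg (mul_nonneg (hR0 x) (hR0 x))]
        exact mul_le_mul hx hx (hR0 x) hC0.le)
  set m₂ : ℝ := ∫ x, R x * R x ∂ν with hm₂_def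
  have hm₂C : m₂ ≤ C := by
    have hpt : ∀ᵐ x ∂ν, R x * R x ≤ C * R x :=
      hRC.mono fun x hx => mul_le_mul_of_nonneg_right hx (hR0 x)
    have := integral_mono_ae hRR_int (hR_int.const_mul C) hpt
    rwa [integral_const_mul, hR1, mul_one] at this
  -- Z and ρ
  set Z : α → ℝ := fun x => if R x = 0 then 1 else 0 with hZ_def
  have hZm : Measurable Z :=
    Measurable.ite (hRm (measurableSet_singleton 0)) measurable_const measurable_const
  have hZ_int : Integrable Z ν := helper_integrable_of_bound ν Z 1 hZm.aestronglyMeasurable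
    (ae_of_all _ fun x => by rw [hZ_def]; dsimp only; split <;> simp)
  set ρ : ℝ := ∫ x, Z x ∂ν with hρ_def
  have hρ0 : 0 ≤ ρ := integral_nonneg fun x => by rw [hZ_def]; dsimp only; split <;> norm_num
  have hρ_le : ρ ≤ 1 - 1/C := by
    have hpt : ∀ᵐ x ∂ν, Z x ≤ 1 - R x / C := hRC.mono fun x hx => by
      rw [hZ_def]; dsimp only
      have h1 : R x / C ≤ 1 := div_le_one_of_le₀ hx hC0.le
      have h2 : 0 ≤ R x / C := div_nonneg (hR0 x) hC0.le
      split
      · next h => rw [h]; norm_num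
      · linarith
    have hint_sub : Integrable (fun x => 1 - R x / C) ν :=
      (integrable_const 1).sub (hR_int.div_const C)
    have h2 := integral_mono_ae hZ_int hint_sub hpt
    rwa [integral_sub (integrable_const 1) (hR_int.div_const C), integral_div, hR1,
      integral_const, probReal_univ, smul_eq_mul, mul_one] at h2
  have hρ1 : ρ < 1 := lt_of_le_of_lt hρ_le (by
    have : 0 < 1/C := by positivity
    linarith)
  -- G, T, W, c
  set G : α → ℝ := fun x => |Real.log (R x)| with hG_def
  have hGm : Measurable G := (Real.measurable_log.comp hRm).abs
  have hG_int : Integrable G ν := hlogR.abs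
  have hG0 : ∀ x, 0 ≤ G x := fun x => abs_nonneg _
  set IG : ℝ := ∫ x, G x ∂ν with hIG_def
  have hIG0 : 0 ≤ IG := integral_nonneg hG0
  set T : ℝ := 2*C*(IG+1) with hT_def
  have hT0 : 0 < T := by rw [hT_def]; nlinarith
  set W : α → ℝ := fun x => if R x = 0 ∨ T < G x then 1 else 0 with hW_def
  have hWm : Measurable W := Measurable.ite
    ((hRm (measurableSet_singleton 0)).union (measurableSet_lt measurable_const hGm))
    measurable_const measurable_const
  have hW_int : Integrable W ν := helper_integrable_of_bound ν W 1 hWm.aestronglyMeasurable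
    (ae_of_all _ fun x => by rw [hW_def]; dsimp only; split <;> simp)
  have hW0 : ∀ x, 0 ≤ W x := fun x => by rw [hW_def]; dsimp only; split <;> norm_num
  set c : ℝ := ∫ x, W x ∂ν with hc_def
  have hc0 : 0 ≤ c := integral_nonneg hW0
  set c' : ℝ := 1 - 1/(2*C) with hc'_def
  have hc'pos : 0 < c' := by
    have h2 : 1/(2*C) ≤ 1/2 := by
      apply one_div_le_one_div_of_le <;> linarith
    rw [hc'_def]; linarith
  have hc'1 : c' < 1 := by
    have : 0 < 1/(2*C) := by positivity
    rw [hc'_def]; linarith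
  have hcc' : c ≤ c' := by
    have hpt : ∀ᵐ x ∂ν, W x ≤ (1 - R x / C) + G x / T := hRC.mono fun x hx => by
      rw [hW_def]; dsimp only
      have hGT : 0 ≤ G x / T := div_nonneg (hG0 x) hT0.le
      have hRC1 : R x / C ≤ 1 := div_le_one_of_le₀ hx hC0.le
      split
      · next h =>
          rcases h with h | h
          · rw [h]; norm_num; linarith
          · have : 1 < G x / T := (one_lt_div hT0).mpr h
            linarith
      · linarith
    have hint_sub : Integrable (fun x => 1 - R x / C) ν :=
      (integrable_const 1).sub (hR_int.div_const C)
    have hint_divT : Integrable (fun x => G x / T) ν := hG_int.div_const T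
    have hint2 : Integrable (fun x => (1 - R x / C) + G x / T) ν := hint_sub.add hint_divT
    have h2 := integral_mono_ae hW_int hint2 hpt
    rw [integral_add hint_sub hint_divT,
      integral_sub (integrable_const 1) (hR_int.div_const C), integral_div, hR1,
      integral_div, ← hIG_def, integral_const, probReal_univ,
      smul_eq_mul, mul_one] at h2
    have h3 : IG/T ≤ 1/(2*C) := by
      rw [hT_def, div_le_div_iff₀ (by nlinarith) (by positivity)]
      nlinarith
    have h4 : 1 - 1/C + 1/(2*C) = c' := by rw [hc'_def]; field_simp; ring
    have h2' : c ≤ 1 - 1/C + IG/T := h2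
    clear_value c c'
    linarith
  -- Gd
  set Gd : α → ℝ := fun x => if 0 < R x ∧ T < G x then G x else 0 with hGd_def
  have hGdm : Measurable Gd := Measurable.ite
    ((measurableSet_lt measurable_const hRm).inter (measurableSet_lt measurable_const hGm))
    hGm measurable_const
  have hGd0 : ∀ x, 0 ≤ Gd x := fun x => by
    rw [hGd_def]; dsimp only; split; exacts [hG0 x, le_refl 0]
  have hGd_le : ∀ x, Gd x ≤ G x := fun x => by
    rw [hGd_def]; dsimp only; split; exacts [le_refl _, hG0 x]
  have hGd_int : Integrable Gd ν := hG_int.mono hGdm.aestronglyMeasurable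
    (ae_of_all _ fun x => by
      rw [Real.norm_eq_abs, Real.norm_eq_abs, abs_of_nonneg (hGd0 x), abs_of_nonneg (hG0 x)]
      exact hGd_le x)
  have hIGd_le : ∫ x, Gd x ∂ν ≤ IG := integral_mono hGd_int hG_int hGd_le
  have hIGd0 : 0 ≤ ∫ x, Gd x ∂ν := integral_nonneg hGd0
  clear_value m₂ ρ IG T c c'
  -- per-k bounds
  have key : ∀ k : ℕ, 1 ≤ k →
      (-(2*(C/(k:ℝ))) - (Real.log k + T)*(4*(C/(k:ℝ))) - (k:ℝ)*(IG*c'^(k-1))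
          ≤ ∫ θ : Fin k → α, Real.log ((1 / (k:ℝ)) * ∑ i, R (θ i))
              ∂(Measure.pi fun _ : Fin k => ν))
        ∧ (∫ θ : Fin k → α, Real.log ((1 / (k:ℝ)) * ∑ i, R (θ i))
              ∂(Measure.pi fun _ : Fin k => ν) ≤ ρ^k) := by
    intro k hk
    have hk0 : (0:ℝ) < (k:ℝ) := by exact_mod_cast Nat.pos_of_ne_zero (by omega)
    have hkne : ((k:ℝ)) ≠ 0 := hk0.ne'
    set π := (Measure.pi fun _ : Fin k => ν) with hπ_def
    haveI : IsProbabilityMeasure π :=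
      inferInstanceAs (IsProbabilityMeasure (Measure.pi fun _ : Fin k => ν))
    set A : (Fin k → α) → ℝ := fun θ => (1 / (k:ℝ)) * ∑ i, R (θ i) with hA_def
    have hIntA : Integrable (fun θ => Real.log (A θ)) π := hInt k
    have hbddR : ∀ᵐ θ : Fin k → α ∂π, ∀ i, R (θ i) ≤ C := helper_ae_pi ν hRC
    have hA_meas : Measurable A := by
      rw [hA_def]
      exact measurable_const.mul
        (Finset.measurable_sum Finset.univ (fun i _ => hRm.comp (measurable_pi_apply i)))
    have hA0 : ∀ θ, 0 ≤ A θ := fun θ => by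
      rw [hA_def]
      exact mul_nonneg (by positivity) (Finset.sum_nonneg fun i _ => hR0 _)
    have hA_le : ∀ᵐ θ ∂π, A θ ≤ C := hbddR.mono fun θ h => by
      rw [hA_def]; dsimp only
      calc (1/(k:ℝ)) * ∑ i, R (θ i) ≤ (1/(k:ℝ)) * ∑ _i : Fin k, C :=
            mul_le_mul_of_nonneg_left (Finset.sum_le_sum fun i _ => h i) (by positivity)
        _ = C := by
            rw [Finset.sum_const, Finset.card_univ, Fintype.card_fin, nsmul_eq_mul]
            field_simp
    have hA_int : Integrable A π := helper_integrable_of_bound π A C hA_meas.aestronglyMeasurable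
      (hA_le.mono fun θ h => by rw [abs_of_nonneg (hA0 θ)]; exact h)
    have hAA_int : Integrable (fun θ => A θ * A θ) π := helper_integrable_of_bound π _ (C*C)
      (hA_meas.mul hA_meas).aestronglyMeasurable
      (hA_le.mono fun θ h => by
        rw [abs_of_nonneg (mul_nonneg (hA0 θ) (hA0 θ))]
        exact mul_le_mul h h (hA0 θ) hC0.le)
    have hAsq_int : Integrable (fun θ => (A θ - 1)^2) π := by
      have e : (fun θ : Fin k → α => (A θ - 1)^2) = fun θ => A θ * A θ - 2*A θ + 1 :=
        funext fun θ => by ring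
      rw [e]
      exact (hAA_int.sub (hA_int.const_mul 2)).add (integrable_const 1)
    have hReval_int : ∀ i : Fin k, Integrable (fun θ : Fin k → α => R (θ i)) π :=
      fun i => helper_integrable_pi_eval ν R hR_int i
    have hA_val : ∫ θ, A θ ∂π = 1 := by
      rw [hA_def]
      simp only
      rw [integral_const_mul, integral_finset_sum Finset.univ (fun i _ => hReval_int i),
        Finset.sum_congr rfl (fun i _ => helper_integral_pi_eval ν R i)]
      simp only [hR1]
      rw [Finset.sum_const, Finset.card_univ, Fintype.card_fin, nsmul_eq_mul]
      field_simp
    have hpair_int : ∀ i j : Fin k, Integrable (fun θ : Fin k → α => R (θ i) * R (θ j)) π :=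
      fun i j => helper_integrable_of_bound π _ (C*C)
        ((hRm.comp (measurable_pi_apply i)).mul
          (hRm.comp (measurable_pi_apply j))).aestronglyMeasurable
        (hbddR.mono fun θ h => by
          rw [abs_of_nonneg (mul_nonneg (hR0 _) (hR0 _))]
          exact mul_le_mul (h i) (h j) (hR0 _) hC0.le)
    have hRiRj : ∀ i j : Fin k,
        ∫ θ : Fin k → α, R (θ i) * R (θ j) ∂π = if j = i then m₂ else 1 := by
      intro i j
      by_cases hij : j = i
      · subst hij
        rw [if_pos rfl, hm₂_def]
        exact helper_integral_pi_eval ν (fun x => R x * R x) j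
      · rw [if_neg hij, helper_integral_pi_pair ν R R i j hij, hR1, mul_one]
    have hsum_sq : ∫ θ, A θ * A θ ∂π = (1/(k:ℝ))^2 * ((k:ℝ)*((k:ℝ) + m₂ - 1)) := by
      have e : (fun θ : Fin k → α => A θ * A θ)
          = fun θ => (1/(k:ℝ))^2 * ∑ i, ∑ j, R (θ i) * R (θ j) := funext fun θ => by
        rw [hA_def]; dsimp only
        rw [← Finset.sum_mul_sum Finset.univ Finset.univ (fun i => R (θ i)) (fun j => R (θ j))]
        ring
      rw [e, integral_const_mul,
        integral_finset_sum Finset.univ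
          (fun i _ => integrable_finset_sum Finset.univ (fun j _ => hpair_int i j)),
        Finset.sum_congr rfl
          (fun i _ => integral_finset_sum Finset.univ (fun j _ => hpair_int i j)),
        Finset.sum_congr rfl
          (fun i _ => Finset.sum_congr rfl (fun j _ => hRiRj i j))]
      have einner : ∀ i : Fin k, (∑ j, if j = i then m₂ else 1) = (k:ℝ) + m₂ - 1 := by
        intro i
        rw [Finset.sum_congr rfl
          (fun j _ => show (if j = i then m₂ else 1) = 1 + (if j = i then m₂ - 1 else 0) by
            split <;> ring),
          Finset.sum_add_distrib, Finset.sum_ite_eq' Finset.univ i (fun _ => m₂ - 1)]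
        simp only [Finset.mem_univ, if_true, Finset.sum_const, Finset.card_univ,
          Fintype.card_fin, nsmul_eq_mul, mul_one]
        ring
      rw [Finset.sum_congr rfl (fun i _ => einner i), Finset.sum_const, Finset.card_univ,
        Fintype.card_fin, nsmul_eq_mul]
    have hA2_le : ∫ θ, (A θ - 1)^2 ∂π ≤ C/(k:ℝ) := by
      have e : (fun θ : Fin k → α => (A θ - 1)^2) = fun θ => A θ * A θ - 2*A θ + 1 :=
        funext fun θ => by ring
      have hsub2 : Integrable (fun θ => A θ * A θ - 2*A θ) π := hAA_int.sub (hA_int.const_mul 2)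
      have hmul2 : Integrable (fun θ => 2*A θ) π := hA_int.const_mul 2
      rw [e, integral_add hsub2 (integrable_const 1),
        integral_sub hAA_int hmul2, integral_const_mul, hA_val, hsum_sq,
        integral_const, probReal_univ, smul_eq_mul, mul_one]
      have e2 : (1/(k:ℝ))^2 * ((k:ℝ)*((k:ℝ) + m₂ - 1)) - 2 + 1*1 = (m₂ - 1)/(k:ℝ) := by
        field_simp
        ring
      rw [e2, div_le_div_iff₀ hk0 hk0]
      nlinarith
    -- u
    set u : (Fin k → α) → ℝ := fun θ => if 0 < A θ ∧ A θ < 1/2 then 1 else 0 with hu_def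
    have hum : Measurable u := Measurable.ite
      ((measurableSet_lt measurable_const hA_meas).inter
        (measurableSet_lt hA_meas measurable_const)) measurable_const measurable_const
    have hu_int : Integrable u π := helper_integrable_of_bound π u 1 hum.aestronglyMeasurable
      (ae_of_all _ fun θ => by rw [hu_def]; dsimp only; split <;> simp)
    have hu0 : ∀ θ, 0 ≤ u θ := fun θ => by rw [hu_def]; dsimp only; split <;> norm_num
    have hu_le : ∫ θ, u θ ∂π ≤ 4*(C/(k:ℝ)) := by
      have hpt : ∀ θ, u θ ≤ 4*(A θ - 1)^2 := fun θ => by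
        rw [hu_def]; dsimp only
        split
        · next h => nlinarith [h.2]
        · positivity
      have h2 := integral_mono hu_int (hAsq_int.const_mul 4) hpt
      rw [integral_const_mul] at h2
      linarith
    -- S
    set S : (Fin k → α) → ℝ :=
      fun θ => ∑ i, Gd (θ i) * ∏ j ∈ Finset.univ.erase i, W (θ j) with hS_def
    have hS0 : ∀ θ, 0 ≤ S θ := fun θ => by
      rw [hS_def]; dsimp only
      exact Finset.sum_nonneg fun i _ =>
        mul_nonneg (hGd0 _) (Finset.prod_nonneg fun j _ => hW0 _)
    have hSterm_int : ∀ i : Fin k, Integrable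
        (fun θ : Fin k → α => Gd (θ i) * ∏ j ∈ Finset.univ.erase i, W (θ j)) π :=
      fun i => helper_integrable_pi_single ν Gd W hGd_int hW_int i
    have hS_int : Integrable S π := by
      rw [hS_def]
      exact integrable_finset_sum _ (fun i _ => hSterm_int i)
    have hS_le : ∫ θ, S θ ∂π ≤ (k:ℝ)*(IG*c'^(k-1)) := by
      rw [hS_def]
      simp only
      rw [integral_finset_sum _ (fun i _ => hSterm_int i),
        Finset.sum_congr rfl (fun i _ => helper_integral_pi_single ν Gd W i),
        Finset.sum_const, Finset.card_univ, Fintype.card_fin, nsmul_eq_mul]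
      have h2 : (∫ x, Gd x ∂ν) * (∫ x, W x ∂ν)^(k-1) ≤ IG * c'^(k-1) := by
        have hW_eq : ∫ x, W x ∂ν = c := hc_def.symm
        rw [hW_eq]
        exact mul_le_mul hIGd_le (pow_le_pow_left₀ hc0 hcc' _) (pow_nonneg hc0 _) hIG0
      exact mul_le_mul_of_nonneg_left h2 hk0.le
    -- pointwise lower bound
    have hlow_pt : ∀ θ : Fin k → α,
        (A θ - 1) - 2*(A θ - 1)^2 - (Real.log k + T)*u θ - S θ ≤ Real.log (A θ) := by
      intro θ
      rcases eq_or_lt_of_le (hA0 θ) with h0 | h0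
      · have hu' : u θ = 0 := by
          rw [hu_def]; dsimp only
          rw [if_neg]
          intro hcond
          rw [← h0] at hcond
          exact lt_irrefl 0 hcond.1
        rw [← h0, Real.log_zero, hu']
        have := hS0 θ
        nlinarith
      · by_cases hhalf : (1:ℝ)/2 ≤ A θ
        · have hu' : u θ = 0 := by
            rw [hu_def]; dsimp only
            rw [if_neg]
            intro hcond
            exact absurd hcond.2 (not_lt.mpr hhalf)
          rw [hu']
          have hlq := helper_log_quad hhalf
          have := hS0 θ
          nlinarith
        · push_neg at hhalf
          have hu' : u θ = 1 := by
            rw [hu_def]; dsimp only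
            rw [if_pos ⟨h0, hhalf⟩]
          have hex : ∃ i, 0 < R (θ i) := by
            by_contra hno
            push_neg at hno
            have hzero : ∑ i, R (θ i) = 0 :=
              Finset.sum_eq_zero fun i _ => le_antisymm (hno i) (hR0 _)
            rw [hA_def] at h0
            dsimp only at h0
            rw [hzero, mul_zero] at h0
            exact lt_irrefl 0 h0
          have hstep : ∀ i, 0 < R (θ i) → -Real.log (A θ) ≤ Real.log k + G (θ i) := by
            intro i hi
            have hle : (1/(k:ℝ)) * R (θ i) ≤ A θ := by
              rw [hA_def]; dsimp only
              exact mul_le_mul_of_nonneg_left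
                (Finset.single_le_sum (f := fun i => R (θ i)) (fun i _ => hR0 _)
                  (Finset.mem_univ i)) (by positivity)
            have hpos : 0 < (1/(k:ℝ)) * R (θ i) := by positivity
            have hlog := Real.log_le_log hpos hle
            rw [Real.log_mul (by positivity) hi.ne', one_div, Real.log_inv] at hlog
            have habs : -G (θ i) ≤ Real.log (R (θ i)) := by
              rw [hG_def]; dsimp only
              exact neg_abs_le _
            linarith
          by_cases hmin : ∃ i, 0 < R (θ i) ∧ G (θ i) ≤ T
          · obtain ⟨i, hi, hGi⟩ := hmin
            have h1 := hstep i hi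
            have h2 := hS0 θ
            rw [hu']
            nlinarith [sq_nonneg (A θ - 1)]
          · push_neg at hmin
            obtain ⟨i0, hi0⟩ := hex
            have hterm : Gd (θ i0) * ∏ j ∈ Finset.univ.erase i0, W (θ j) = G (θ i0) := by
              have h1 : Gd (θ i0) = G (θ i0) := by
                rw [hGd_def]; dsimp only
                rw [if_pos ⟨hi0, hmin i0 hi0⟩]
              have h2 : ∀ j ∈ Finset.univ.erase i0, W (θ j) = 1 := fun j _ => by
                rw [hW_def]; dsimp only
                rw [if_pos]
                rcases (hR0 (θ j)).eq_or_lt with h | h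
                · exact Or.inl h.symm
                · exact Or.inr (hmin j h)
              rw [h1, Finset.prod_congr rfl h2, Finset.prod_const_one, mul_one]
            have hSge : G (θ i0) ≤ S θ := by
              rw [hS_def]; dsimp only
              rw [← hterm]
              exact Finset.single_le_sum
                (f := fun i => Gd (θ i) * ∏ j ∈ Finset.univ.erase i, W (θ j))
                (fun i _ => mul_nonneg (hGd0 _) (Finset.prod_nonneg fun j _ => hW0 _))
                (Finset.mem_univ i0)
            have h1 := hstep i0 hi0
            rw [hu']
            nlinarith [sq_nonneg (A θ - 1)]
    -- integrate the lower bound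
    have i1 : Integrable (fun θ => A θ - 1) π := hA_int.sub (integrable_const 1)
    have isq2 : Integrable (fun θ => 2*(A θ - 1)^2) π := hAsq_int.const_mul 2
    have i2 : Integrable (fun θ => (A θ - 1) - 2*(A θ - 1)^2) π := i1.sub isq2
    have iu : Integrable (fun θ => (Real.log k + T)*u θ) π := hu_int.const_mul _
    have i3 : Integrable (fun θ => (A θ - 1) - 2*(A θ - 1)^2 - (Real.log k + T)*u θ) π :=
      i2.sub iu
    have hRHS_int : Integrable
        (fun θ => (A θ - 1) - 2*(A θ - 1)^2 - (Real.log k + T)*u θ - S θ) π := i3.sub hS_int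
    have hmono := integral_mono hRHS_int hIntA hlow_pt
    have hsplit : ∫ θ, ((A θ - 1) - 2*(A θ - 1)^2 - (Real.log k + T)*u θ - S θ) ∂π
        = ((∫ θ, A θ ∂π) - 1) - 2*(∫ θ, (A θ - 1)^2 ∂π)
            - (Real.log k + T)*(∫ θ, u θ ∂π) - ∫ θ, S θ ∂π := by
      have hIu : ∫ θ, (Real.log k + T)*u θ ∂π = (Real.log k + T)*∫ θ, u θ ∂π :=
        integral_const_mul _ _
      have hI2 : ∫ θ, 2*(A θ - 1)^2 ∂π = 2*∫ θ, (A θ - 1)^2 ∂π := integral_const_mul _ _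
      rw [integral_sub i3 hS_int, integral_sub i2 iu, integral_sub i1 isq2,
        integral_sub hA_int (integrable_const 1), hIu, hI2, integral_const, probReal_univ, smul_eq_mul, mul_one]
    have hlogk0 : (0:ℝ) ≤ Real.log k := Real.log_nonneg (by exact_mod_cast hk)
    have hlkT : (0:ℝ) ≤ Real.log k + T := by linarith
    have hprod_u : (Real.log k + T)*(∫ θ, u θ ∂π)
        ≤ (Real.log k + T)*(4*(C/(k:ℝ))) := mul_le_mul_of_nonneg_left hu_le hlkT
    have hu_nonneg : 0 ≤ ∫ θ, u θ ∂π := integral_nonneg hu0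
    constructor
    · show -(2*(C/(k:ℝ))) - (Real.log k + T)*(4*(C/(k:ℝ))) - (k:ℝ)*(IG*c'^(k-1))
        ≤ ∫ θ, Real.log (A θ) ∂π
      rw [hsplit, hA_val] at hmono
      linarith [hA2_le, hS_le, hprod_u]
    · show ∫ θ, Real.log (A θ) ∂π ≤ ρ^k
      have hZprod_int : Integrable (fun θ : Fin k → α => ∏ i, Z (θ i)) π :=
        helper_integrable_pi_prod ν _ (fun _ => hZ_int)
      have hup_pt : ∀ θ, Real.log (A θ) ≤ (A θ - 1) + ∏ i, Z (θ i) := by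
        intro θ
        rcases eq_or_lt_of_le (hA0 θ) with h0 | h0
        · have hzero : ∀ i, R (θ i) = 0 := by
            intro i
            have hsum : ∑ i, R (θ i) = 0 := by
              rw [hA_def] at h0
              dsimp only at h0
              rcases mul_eq_zero.mp h0.symm with h | h
              · exact absurd h (by positivity)
              · exact h
            exact (Finset.sum_eq_zero_iff_of_nonneg (fun i _ => hR0 _)).mp hsum i
              (Finset.mem_univ i)
          have hZ1 : ∏ i, Z (θ i) = 1 := Finset.prod_eq_one fun i _ => by
            rw [hZ_def]; dsimp only
            rw [if_pos (hzero i)]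
          rw [← h0, Real.log_zero, hZ1]
          norm_num
        · have h1 := Real.log_le_sub_one_of_pos h0
          have hZn : 0 ≤ ∏ i, Z (θ i) := Finset.prod_nonneg fun i _ => by
            rw [hZ_def]; dsimp only
            split <;> norm_num
          linarith
      have j1 : Integrable (fun θ => A θ - 1) π := hA_int.sub (integrable_const 1)
      have hup_int : Integrable (fun θ => (A θ - 1) + ∏ i, Z (θ i)) π := j1.add hZprod_int
      have h1 := integral_mono hIntA hup_int hup_pt
      rw [integral_add j1 hZprod_int,
        integral_sub hA_int (integrable_const 1), hA_val, integral_const, probReal_univ, smul_eq_mul, mul_one, helper_integral_pi_prod,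
        Finset.prod_const, Finset.card_univ, Fintype.card_fin] at h1
      have hρeq : (∫ x, Z x ∂ν)^k = ρ^k := by rw [← hρ_def]
      rw [hρeq] at h1
      linarith
  -- limits and squeeze
  have hUp0 : Tendsto (fun k : ℕ => ρ^k) atTop (nhds 0) :=
    tendsto_pow_atTop_nhds_zero_of_lt_one hρ0 hρ1
  have hlogdiv : Tendsto (fun x : ℝ => Real.log x / x) atTop (nhds 0) :=
    Real.isLittleO_log_id_atTop.tendsto_div_nhds_zero
  have hlogk : Tendsto (fun k : ℕ => Real.log k / (k:ℝ)) atTop (nhds 0) :=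
    hlogdiv.comp tendsto_natCast_atTop_atTop
  have hCk : Tendsto (fun k : ℕ => C/(k:ℝ)) atTop (nhds 0) :=
    tendsto_const_div_atTop_nhds_zero_nat C
  have hgeo : Tendsto (fun k : ℕ => (k:ℝ)*c'^k) atTop (nhds 0) :=
    tendsto_self_mul_const_pow_of_lt_one hc'pos.le hc'1
  have hc'ne : c' ≠ 0 := hc'pos.ne'
  have htail : Tendsto (fun k : ℕ => (k:ℝ)*(IG*c'^(k-1))) atTop (nhds 0) := by
    have h1 : Tendsto (fun k : ℕ => (IG/c')*((k:ℝ)*c'^k)) atTop (nhds 0) := by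
      simpa using hgeo.const_mul (IG/c')
    apply h1.congr'
    filter_upwards [eventually_ge_atTop 1] with k hk
    have e : c'^k = c'^(k-1)*c' := by
      conv_lhs => rw [show k = (k-1)+1 from (Nat.succ_pred_eq_of_pos hk).symm]
      rw [pow_succ]
    rw [e]
    field_simp
  have hLow0 : Tendsto (fun k : ℕ =>
      -(2*(C/(k:ℝ))) - (Real.log k + T)*(4*(C/(k:ℝ))) - (k:ℝ)*(IG*c'^(k-1)))
      atTop (nhds 0) := by
    have hsum : Tendsto (fun k : ℕ =>
        2*(C/(k:ℝ)) + ((4*C)*(Real.log k/(k:ℝ)) + (4*T)*(C/(k:ℝ))) + (k:ℝ)*(IG*c'^(k-1)))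
        atTop (nhds 0) := by
      have h2 := ((hCk.const_mul 2).add
        ((hlogk.const_mul (4*C)).add (hCk.const_mul (4*T)))).add htail
      simpa using h2
    have h3 := hsum.neg
    rw [neg_zero] at h3
    exact h3.congr (fun k => by ring)
  exact tendsto_of_tendsto_of_tendsto_of_le_of_le' hLow0 hUp0
    (by filter_upwards [eventually_ge_atTop 1] with k hk
        exact (key k hk).1)
    (by filter_upwards [eventually_ge_atTop 1] with k hk
        exact (key k hk).2)

end Helpers
/-- If the density ratio `p/q` is bounded, then the multi-sample importance-weighted
KL divergence `KL^k(q,p) = -E_{Θ¹,…,Θᵏ ~ q iid}[log((1/k)∑ᵢ p(Θⁱ)/q(Θⁱ))]`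
converges to zero as `k → ∞`. -/
theorem stein_viwae_multi_sample_kl_tendsto_zero {d : ℕ}
    (p q : EuclideanSpace ℝ (Fin d) → ℝ)
    (hp0 : ∀ x, 0 ≤ p x) (hq0 : ∀ x, 0 ≤ q x)
    (hpm : Measurable p) (hqm : Measurable q)
    (hp1 : ∫ x, p x = 1) (hq1 : ∫ x, q x = 1)
    (hsupp : ∀ x, 0 < p x → 0 < q x)
    (C : ℝ) (hC : 0 < C)
    (hbound : ∀ x, 0 < q x → p x / q x ≤ C)
    (hInt : ∀ k : ℕ, Integrable
      (fun θ : Fin k → EuclideanSpace ℝ (Fin d) =>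
        Real.log ((1 / (k : ℝ)) * ∑ i, p (θ i) / q (θ i)))
      (Measure.pi fun _ => volume.withDensity fun x => ENNReal.ofReal (q x))) :
    Tendsto (fun k : ℕ =>
        -∫ θ : Fin k → EuclideanSpace ℝ (Fin d),
          Real.log ((1 / (k : ℝ)) * ∑ i, p (θ i) / q (θ i))
          ∂(Measure.pi fun _ => volume.withDensity fun x => ENNReal.ofReal (q x)))
      atTop (nhds 0) := by
  set ν := volume.withDensity fun x : EuclideanSpace ℝ (Fin d) => ENNReal.ofReal (q x)
    with hν_def
  have hq_int : Integrable q volume := by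
    by_contra h
    rw [MeasureTheory.integral_undef h] at hq1
    exact one_ne_zero hq1.symm
  have hνuniv : ν Set.univ = 1 := by
    rw [hν_def, withDensity_apply _ MeasurableSet.univ, setLIntegral_univ,
      ← MeasureTheory.ofReal_integral_eq_lintegral_ofReal hq_int (ae_of_all _ hq0), hq1,
      ENNReal.ofReal_one]
  haveI : IsProbabilityMeasure ν := ⟨hνuniv⟩
  have hq_pos : ∀ᵐ x ∂ν, 0 < q x := by
    have hs : MeasurableSet {x : EuclideanSpace ℝ (Fin d) | q x ≤ 0} := hqm measurableSet_Iic
    have h0 : ν {x : EuclideanSpace ℝ (Fin d) | q x ≤ 0} = 0 := by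
      have h1 : ∫⁻ x in {x : EuclideanSpace ℝ (Fin d) | q x ≤ 0}, ENNReal.ofReal (q x) ∂volume
          = ∫⁻ _x in {x : EuclideanSpace ℝ (Fin d) | q x ≤ 0}, 0 ∂volume :=
        setLIntegral_congr_fun hs (fun x hx => by
          simpa [ENNReal.ofReal_eq_zero] using hx)
      rw [hν_def, withDensity_apply _ hs, h1]
      simp
    have hset : {x : EuclideanSpace ℝ (Fin d) | ¬ 0 < q x}
        = {x : EuclideanSpace ℝ (Fin d) | q x ≤ 0} := by
      ext x; simp [not_lt]
    rw [ae_iff, hset]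
    exact h0
  have hdens : ∀ g : EuclideanSpace ℝ (Fin d) → ℝ, ∫ x, g x ∂ν = ∫ x, q x * g x := by
    intro g
    rw [hν_def]
    rw [show (fun x : EuclideanSpace ℝ (Fin d) => ENNReal.ofReal (q x))
        = (fun x => ((Real.toNNReal (q x) : NNReal) : ENNReal)) from rfl]
    rw [integral_withDensity_eq_integral_smul hqm.real_toNNReal g]
    congr 1
    funext x
    rw [NNReal.smul_def, Real.coe_toNNReal _ (hq0 x), smul_eq_mul]
  have hR0 : ∀ x, 0 ≤ p x / q x := fun x => div_nonneg (hp0 x) (hq0 x)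
  have hRm : Measurable (fun x : EuclideanSpace ℝ (Fin d) => p x / q x) := hpm.div hqm
  have hRC : ∀ᵐ x ∂ν, p x / q x ≤ C := hq_pos.mono fun x hx => hbound x hx
  have hR1 : ∫ x, p x / q x ∂ν = 1 := by
    rw [hdens]
    have e : (fun x : EuclideanSpace ℝ (Fin d) => q x * (p x / q x)) = p := by
      funext x
      rcases (hq0 x).eq_or_lt with h | h
      · have hp0x : p x = 0 := by
          by_contra hne
          have h2 := hsupp x ((hp0 x).lt_of_ne (Ne.symm hne))
          rw [← h] at h2
          exact lt_irrefl 0 h2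
        rw [← h, hp0x]
        simp
      · rw [mul_comm, div_mul_cancel₀ _ h.ne']
    rw [e, hp1]
  have hlogR : Integrable (fun x : EuclideanSpace ℝ (Fin d) => Real.log (p x / q x)) ν := by
    have h1 := hInt 1
    have e : (fun θ : Fin 1 → EuclideanSpace ℝ (Fin d) =>
        Real.log ((1 / ((1:ℕ):ℝ)) * ∑ i, p (θ i) / q (θ i)))
        = fun θ : Fin 1 → EuclideanSpace ℝ (Fin d) => Real.log (p (θ 0) / q (θ 0)) := by
      funext θ
      rw [Fin.sum_univ_one]
      norm_num
    rw [e] at h1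
    have hmp := MeasureTheory.measurePreserving_funUnique
      (β := EuclideanSpace ℝ (Fin d)) ν (Fin 1)
    exact (hmp.integrable_comp_emb
      (MeasurableEquiv.funUnique (Fin 1) (EuclideanSpace ℝ (Fin d))).measurableEmbedding).mp h1
  have hmain := aux_main ν (fun x => p x / q x) hRm hR0 C hRC hR1 hlogR hInt
  have h2 := hmain.neg
  rw [neg_zero] at h2
  exact h2
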